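/- Let ω : ℝ → ℂ be continuous with compact support, s : ℤ → ℂ a signal with finite support, N a positive natural number, and f : ℤ a frequency index. Then the function F : ℝ → ℂ defined by F(t) = ∑_{k ∈ ℤ} ω(k - (t - ⌊t⌋)) · s(⌊t⌋ + k) · e^{-2πi(k - (t - ⌊t⌋))f/N} is continuous on all of ℝ (in particular, at every integer t). -/

import Mathlib

/-!
Since `k - {t} = (⌊t⌋ + k) - t`, the substitution `j = ⌊t⌋ + k` rewrites the frame as
`∑ⱼ ω (j - t) * s j * exp (-2πi (j - t) f / N)`, in which the floor no longer appears. This is a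
sum, over the finite support of `s`, of continuous functions of `t`.
-/

open Complex Real

theorem continuous_finsum_of_finite_support {ι X M : Type*} [TopologicalSpace X]
    [AddCommMonoid M] [TopologicalSpace M] [ContinuousAdd M] {φ : ι → X → M}
    (hφ : ∀ i, Continuous (φ i)) {S : Set ι} (hS : S.Finite) (hφS : ∀ i ∉ S, φ i = 0) :
    Continuous fun x => ∑ᶠ i, φ i x := by
  refine continuous_finsum hφ fun _ => ⟨Set.univ, Filter.univ_mem, hS.subset ?_⟩
  rintro i ⟨x, hx, -⟩
  by_contra hi
  simp [hφS i hi] at hx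

theorem finsum_floor_add_fract_eq {M : Type*} [AddCommMonoid M] (G : ℝ → ℤ → M) (t : ℝ) :
    ∑ᶠ k : ℤ, G (k - Int.fract t) (⌊t⌋ + k) = ∑ᶠ j : ℤ, G (j - t) j := by
  refine finsum_eq_of_bijective (⌊t⌋ + ·) (Equiv.addLeft ⌊t⌋).bijective fun k => ?_
  rw [Int.fract]
  push_cast
  ring_nf

theorem stmt_1_general (ω : ℝ → ℂ) (hω : Continuous ω)
    (s : ℤ → ℂ) (hs : (Function.support s).Finite)
    (N : ℕ) (f : ℤ) :
    Continuous (fun t : ℝ =>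
      ∑ᶠ k : ℤ, ω ((k : ℝ) - Int.fract t) * s (⌊t⌋ + k) *
        Complex.exp (-2 * (Real.pi : ℂ) * Complex.I *
          ((k : ℂ) - (Int.fract t : ℝ)) * (f : ℂ) / (N : ℂ))) := by
  let G : ℝ → ℤ → ℂ := fun x j =>
    ω x * s j * Complex.exp (-2 * (Real.pi : ℂ) * Complex.I * (x : ℂ) * (f : ℂ) / (N : ℂ))
  have hshift : ∀ t : ℝ, ∑ᶠ k : ℤ, ω ((k : ℝ) - Int.fract t) * s (⌊t⌋ + k) *
      Complex.exp (-2 * (Real.pi : ℂ) * Complex.I *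
        ((k : ℂ) - (Int.fract t : ℝ)) * (f : ℂ) / (N : ℂ)) = ∑ᶠ j : ℤ, G (j - t) j := by
    intro t
    rw [← finsum_floor_add_fract_eq G t]
    simp only [G, Complex.ofReal_sub, Complex.ofReal_intCast]
  simp_rw [hshift]
  refine continuous_finsum_of_finite_support (fun j => ?_) hs fun j hj => ?_
  · fun_prop
  · ext t
    simp [G, Function.notMem_support.mp hj]

/-- the modified STFT frame, as a function of the continuous
frame position `t`, is continuous on all of ℝ. -/
theorem stmt_1 (ω : ℝ → ℂ) (hω : Continuous ω) (hωc : HasCompactSupport ω)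
    (s : ℤ → ℂ) (hs : (Function.support s).Finite)
    (N : ℕ) (hN : 0 < N) (f : ℤ) :
    Continuous (fun t : ℝ =>
      ∑ᶠ k : ℤ, ω ((k : ℝ) - Int.fract t) * s (⌊t⌋ + k) *
        Complex.exp (-2 * (Real.pi : ℂ) * Complex.I *
          ((k : ℂ) - (Int.fract t : ℝ)) * (f : ℂ) / (N : ℂ))) :=
  stmt_1_general ω hω s hs N f
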